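/- arXiv:1605.05240 — 5 statements merged into one kernel-verified Lean document; each statement's English description precedes it below -/
import Mathlib

section
/- For every integer n ≥ 0, in any field of characteristic p > 3, the n-th reversed Dickson polynomial of the (k+1)-th kind satisfies D_{n,k}(1, 1/4) = (kn − k + 2)/2^n. -/
open Finset

/-- The `n`-th reversed Dickson polynomial of the `(k+1)`-th kind, evaluated at `(a, x)`.
For `n ≥ 1` it is `∑_{i=0}^{⌊n/2⌋} ((n-ki)/(n-i))·C(n-i,i)·(-x)^i·a^{n-2i}`, where the
integer coefficient `((n-ki)/(n-i))·C(n-i,i)` is written as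
`k·C(n-i,i) - (k-1)·(n/(n-i))·C(n-i,i)` and `(n/(n-i))·C(n-i,i) = C(n-i,i) + C(n-i-1,i-1)`
(equal to `1` when `i = 0`). For `n = 0` it is `2 - k`. -/
noncomputable def revDickson {F : Type*} [Field F] (k : ℤ) (n : ℕ) (a x : F) : F :=
  if n = 0 then ((2 - k : ℤ) : F) else
    ∑ i ∈ Finset.range (n / 2 + 1),
      ((k * ((n - i).choose i : ℤ) -
          (k - 1) * (if i = 0 then 1 else ((n - i).choose i : ℤ) + ((n - i - 1).choose (i - 1) : ℤ))) : F)
        * (-x) ^ i * a ^ (n - 2 * i)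

/-!
Splitting the coefficient as in the definition gives `D_{n,k}(1,x) = k E_n(x) - (k-1) D_n(x)`,
where `E_n`, `D_n` are the reversed Dickson polynomials of the second and first kinds; Pascal's
rule gives `D_{n+2} = E_{n+2} - x E_n`, hence `D_{n+2,k}(1,x) = E_{n+2}(x) + (k-1) x E_n(x)`.
The `E_n` satisfy `E_{n+2} = E_{n+1} - x E_n`; at `x = a²` with `2a = 1` (the double root of
`t² - t + x`) this recursion gives `E_n(a²) = (n+1) aⁿ`. Take `a = 1/2`.
-/

section SecondKind

variable {R : Type*} [CommRing R]

/-- `E_n(1,x) = ∑ C(n-i,i) (-x)^i`, indexed by `i + j = n` so that no truncated subtraction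
occurs. -/
def revDicksonSecondKind (n : ℕ) (x : R) : R :=
  ∑ p ∈ antidiagonal n, (p.2.choose p.1 : R) * (-x) ^ p.1

theorem revDicksonSecondKind_succ (n : ℕ) (x : R) :
    revDicksonSecondKind (n + 1) x =
      1 + ∑ p ∈ antidiagonal n, (p.2.choose (p.1 + 1) : R) * (-x) ^ (p.1 + 1) := by
  simp [revDicksonSecondKind, Nat.sum_antidiagonal_succ]

theorem revDicksonSecondKind_add_two (n : ℕ) (x : R) :
    revDicksonSecondKind (n + 2) x =
      revDicksonSecondKind (n + 1) x - x * revDicksonSecondKind n x := by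
  have pascal : ∀ p ∈ antidiagonal n, ((p.2 + 1).choose (p.1 + 1) : R) * (-x) ^ (p.1 + 1) =
      (p.2.choose (p.1 + 1) : R) * (-x) ^ (p.1 + 1) - x * ((p.2.choose p.1 : R) * (-x) ^ p.1) := by
    intro p _
    rw [Nat.choose_succ_succ', Nat.cast_add]
    ring
  rw [revDicksonSecondKind_succ, revDicksonSecondKind_succ, Nat.sum_antidiagonal_succ',
    sum_congr rfl pascal, sum_sub_distrib, ← mul_sum, revDicksonSecondKind, Nat.choose_zero_succ,
    Nat.cast_zero, zero_mul, zero_add, add_sub_assoc]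

theorem revDicksonSecondKind_eq_sum_range (n : ℕ) (x : R) :
    revDicksonSecondKind n x = ∑ i ∈ range (n / 2 + 1), ((n - i).choose i : R) * (-x) ^ i := by
  rw [revDicksonSecondKind, Nat.sum_antidiagonal_eq_sum_range_succ
    (fun i j => ((j.choose i : ℕ) : R) * (-x) ^ i)]
  refine (sum_subset (range_subset_range.2 (by omega)) fun i _ hi => ?_).symm
  rw [Nat.choose_eq_zero_of_lt (by simp at hi; omega), Nat.cast_zero, zero_mul]

theorem revDicksonSecondKind_sq {a : R} (ha : 2 * a = 1) (n : ℕ) :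
    revDicksonSecondKind n (a ^ 2) = (n + 1) * a ^ n := by
  induction n using Nat.twoStepInduction with
  | zero => simp [revDicksonSecondKind]
  | one =>
    simp only [revDicksonSecondKind_succ, HasAntidiagonal.antidiagonal_zero, sum_singleton,
      zero_add, Nat.choose_succ_self, Nat.cast_zero, pow_one, mul_neg, zero_mul, neg_zero, add_zero,
      Nat.cast_one]
    linear_combination -ha
  | more n ih₀ ih₁ =>
    rw [revDicksonSecondKind_add_two, ih₀, ih₁]
    push_cast
    linear_combination -(n + 2) * a ^ (n + 1) * ha

end SecondKind

section RevDickson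

variable {F : Type*} [Field F]

theorem revDickson_zero (k : ℤ) (a x : F) : revDickson k 0 a x = 2 - k := by
  simp [revDickson]

theorem revDickson_one (k : ℤ) (a x : F) : revDickson k 1 a x = a := by
  simp [revDickson]

theorem revDickson_add_two_at_one (k : ℤ) (m : ℕ) (x : F) :
    revDickson k (m + 2) 1 x =
      revDicksonSecondKind (m + 2) x + (k - 1) * x * revDicksonSecondKind m x := by
  have summand : ∀ i ∈ range (m / 2 + 1),
      ((k * ((m + 2 - (i + 1)).choose (i + 1) : ℤ) - (k - 1) *
          (if i + 1 = 0 then 1 else ((m + 2 - (i + 1)).choose (i + 1) : ℤ) +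
            ((m + 2 - (i + 1) - 1).choose (i + 1 - 1) : ℤ))) : F) *
          (-x) ^ (i + 1) * 1 ^ (m + 2 - 2 * (i + 1)) =
        ((m + 2 - (i + 1)).choose (i + 1) : F) * (-x) ^ (i + 1) +
          (k - 1) * x * (((m - i).choose i : F) * (-x) ^ i) := by
    intro i _
    rw [if_neg i.succ_ne_zero, show m + 2 - (i + 1) - 1 = m - i by omega, Nat.add_sub_cancel]
    push_cast
    ring
  rw [revDickson, if_neg (by omega), revDicksonSecondKind_eq_sum_range,
    revDicksonSecondKind_eq_sum_range, show (m + 2) / 2 = m / 2 + 1 by omega, sum_range_succ',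
    sum_range_succ' _ (m / 2 + 1), sum_congr rfl summand, sum_add_distrib, mul_sum]
  simp only [Nat.reduceSubDiff, tsub_zero, Nat.choose_zero_right, Nat.cast_one, Int.cast_one, mul_one,
    ↓reduceIte, sub_sub_cancel, pow_zero, mul_zero, one_pow]
  ring

end RevDickson

theorem stmt_3_general {F : Type*} [Field F] {p : ℕ} [CharP F p]
    (h3 : 3 < p) (k : ℤ) (n : ℕ) :
    revDickson k n 1 ((1 : F) / 4) = ((k * n - k + 2 : ℤ) : F) / 2 ^ n := by
  have h2 : (2 : F) ≠ 0 := Ring.two_ne_zero (by rw [ringChar.eq F p]; omega)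
  have half : 2 * (2 : F)⁻¹ = 1 := mul_inv_cancel₀ h2
  have quarter : (1 : F) / 4 = 2⁻¹ ^ 2 := by norm_num
  rw [quarter, div_eq_mul_inv _ (2 ^ n), ← inv_pow]
  match n with
  | 0 =>
    rw [revDickson_zero]
    push_cast
    ring
  | 1 =>
    rw [revDickson_one]
    push_cast
    linear_combination -half
  | m + 2 =>
    rw [revDickson_add_two_at_one, revDicksonSecondKind_sq half, revDicksonSecondKind_sq half]
    push_cast
    ring

theorem stmt_3 {F : Type*} [Field F] {p : ℕ} [CharP F p]
    (hp : p.Prime) (h3 : 3 < p) (k : ℤ) (n : ℕ) :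
    revDickson k n 1 ((1 : F) / 4) = ((k * n - k + 2 : ℤ) : F) / 2 ^ n :=
  stmt_3_general h3 k n
end

section
/- Let q = p^e with p > 3 prime, 1 ≤ s ≤ e, and k not divisible by p. Then D_{p^s,k}(1,x) is not a permutation polynomial of F_q. -/
open Finset

/-!
Write `x = u v` with `u + v = 1`. Then `E_n(1, x) = ∑_{i+j=n} uⁱ vʲ`, the first-kind polynomial is
`uⁿ + vⁿ`, and `D_{n,k}(1, u v) = k ∑_{i+j=n} uⁱ vʲ - (k - 1)(uⁿ + vⁿ)`. If `u ≠ v` are both fixed by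
`t ↦ tⁿ`, then `(u - v) ∑_{i+j=n} uⁱ vʲ = uⁿ⁺¹ - vⁿ⁺¹ = u² - v² = u - v`, so `D_{n,k}(1, u v) = 1`.
For `n = pˢ` the prime field is fixed, and `(u, v) = (1, 0)`, `(2, -1)` give
`D_{pˢ,k}(1, 0) = D_{pˢ,k}(1, -2) = 1`; here `p > 3` makes `u ≠ v` and `0 ≠ -2`.
-/

section
variable {R : Type*} [CommRing R]

/-- `E_n(1, x)`, the reversed Dickson polynomial of the second kind. -/
noncomputable def revDicksonE (n : ℕ) (x : R) : R :=
  ∑ ij ∈ antidiagonal n, (ij.1.choose ij.2 : R) * (-x) ^ ij.2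

theorem revDicksonE_add_two (n : ℕ) (x : R) :
    revDicksonE (n + 2) x = revDicksonE (n + 1) x - x * revDicksonE n x := by
  rw [revDicksonE, Nat.sum_antidiagonal_succ', Nat.sum_antidiagonal_succ, revDicksonE,
    Nat.sum_antidiagonal_succ', revDicksonE]
  simp only [Nat.choose_succ_succ, Nat.choose_zero_succ, Nat.cast_add, add_mul, sum_add_distrib,
    Nat.cast_zero, zero_mul, zero_add, Nat.choose_zero_right, Nat.succ_eq_add_one,
    pow_succ _ (Prod.snd _), ← mul_assoc, ← sum_mul]
  ring

theorem revDicksonE_eq_sum_range (n : ℕ) (x : R) :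
    revDicksonE n x = ∑ i ∈ range (n / 2 + 1), ((n - i).choose i : R) * (-x) ^ i := by
  rw [revDicksonE, ← Nat.sum_antidiagonal_swap, Nat.sum_antidiagonal_eq_sum_range_succ_mk]
  refine (sum_subset (range_subset_range.2 (by omega)) fun i _ hi => ?_).symm
  rw [mem_range] at hi
  simp [Nat.choose_eq_zero_of_lt (by omega : n - i < i)]

theorem sum_antidiagonal_pow_mul_pow_succ (u v : R) (n : ℕ) :
    ∑ ij ∈ antidiagonal (n + 1), u ^ ij.1 * v ^ ij.2
      = u * ∑ ij ∈ antidiagonal n, u ^ ij.1 * v ^ ij.2 + v ^ (n + 1) := by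
  rw [Nat.sum_antidiagonal_succ, mul_sum]
  simp only [pow_succ', pow_zero, one_mul, mul_assoc]
  ring

theorem sum_antidiagonal_pow_mul_pow_succ' (u v : R) (n : ℕ) :
    ∑ ij ∈ antidiagonal (n + 1), u ^ ij.1 * v ^ ij.2
      = v * ∑ ij ∈ antidiagonal n, u ^ ij.1 * v ^ ij.2 + u ^ (n + 1) := by
  rw [Nat.sum_antidiagonal_succ', mul_sum]
  simp only [pow_succ', pow_zero, mul_one, mul_left_comm v]
  ring

variable {u v : R}

theorem revDicksonE_mul_of_add_eq_one (huv : u + v = 1) (n : ℕ) :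
    revDicksonE n (u * v) = ∑ ij ∈ antidiagonal n, u ^ ij.1 * v ^ ij.2 := by
  induction n using Nat.twoStepInduction with
  | zero => simp [revDicksonE]
  | one => simpa [revDicksonE, Nat.sum_antidiagonal_succ, add_comm] using huv.symm
  | more n ih₀ ih₁ =>
    rw [revDicksonE_add_two, ih₀, ih₁]
    linear_combination u * sum_antidiagonal_pow_mul_pow_succ' u v n
      - sum_antidiagonal_pow_mul_pow_succ' u v (n + 1)
      - (∑ ij ∈ antidiagonal (n + 1), u ^ ij.1 * v ^ ij.2) * huv

end

theorem revDickson_add_two_eq_revDicksonE {F : Type*} [Field F] (k : ℤ) (n : ℕ) (x : F) :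
    revDickson k (n + 2) 1 x = revDicksonE (n + 2) x + (k - 1) * x * revDicksonE n x := by
  rw [revDickson, if_neg (by omega), revDicksonE_eq_sum_range, revDicksonE_eq_sum_range,
    show (n + 2) / 2 = n / 2 + 1 by omega, sum_range_succ' _ (n / 2 + 1),
    sum_range_succ' _ (n / 2 + 1), mul_sum, add_right_comm _ _ (∑ i ∈ range (n / 2 + 1), _),
    ← sum_add_distrib]
  simp only [one_pow, mul_one, if_pos, if_neg (Nat.succ_ne_zero _), Nat.add_sub_cancel,
    show ∀ i, n + 2 - (i + 1) - 1 = n - i by omega]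
  congr 1
  · refine sum_congr rfl fun i _ => ?_
    push_cast
    ring
  · simp

section
variable {F : Type*} [Field F] {u v : F}

theorem revDickson_mul_of_add_eq_one (k : ℤ) (huv : u + v = 1) (n : ℕ) :
    revDickson k n 1 (u * v)
      = k * ∑ ij ∈ antidiagonal n, u ^ ij.1 * v ^ ij.2 - (k - 1) * (u ^ n + v ^ n) := by
  match n with
  | 0 => simp [revDickson]; ring
  | 1 => simp [revDickson, Nat.sum_antidiagonal_succ, add_comm v, huv]
  | n + 2 =>
    rw [revDickson_add_two_eq_revDicksonE, revDicksonE_mul_of_add_eq_one huv,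
      revDicksonE_mul_of_add_eq_one huv]
    linear_combination (1 - k) * (sum_antidiagonal_pow_mul_pow_succ u v (n + 1)
      + u * sum_antidiagonal_pow_mul_pow_succ' u v n)

theorem revDickson_mul_eq_one (k : ℤ) {n : ℕ} (huv : u + v = 1) (hne : u ≠ v)
    (hu : u ^ n = u) (hv : v ^ n = v) : revDickson k n 1 (u * v) = 1 := by
  have hG : (u - v) * ∑ ij ∈ antidiagonal n, u ^ ij.1 * v ^ ij.2 = (u - v) * 1 := by
    linear_combination sum_antidiagonal_pow_mul_pow_succ' u v n
      - sum_antidiagonal_pow_mul_pow_succ u v n + u * hu - v * hv + (u - v) * huv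
  rw [revDickson_mul_of_add_eq_one k huv, mul_left_cancel₀ (sub_ne_zero.2 hne) hG, hu, hv, huv]
  ring

end

theorem stmt_10_general {F : Type*} [Field F] {p : ℕ} [CharP F p]
    (hp : p.Prime) (h3 : 3 < p)
    (s : ℕ) (k : ℤ) :
    ¬ Function.Bijective (fun x : F => revDickson k (p ^ s) 1 x) := by
  have := Fact.mk hp
  have hcast {m : ℕ} (hm₀ : 0 < m) (hmp : m < p) : (m : F) ≠ 0 := fun h =>
    Nat.not_dvd_of_pos_of_lt hm₀ hmp ((CharP.cast_eq_zero_iff F p m).1 h)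
  have hF2 : (2 : F) ≠ 0 := by exact_mod_cast hcast two_pos (by omega)
  have hF3 : (3 : F) ≠ 0 := by exact_mod_cast hcast three_pos h3
  have hfix (m : ℤ) : (m : F) ^ p ^ s = m := map_intCast (iterateFrobenius F p s) m
  have hD₀ : revDickson k (p ^ s) 1 ((1 : F) * 0) = 1 :=
    revDickson_mul_eq_one k (add_zero 1) one_ne_zero (one_pow _)
      (zero_pow (pow_ne_zero _ hp.ne_zero))
  have hD₂ : revDickson k (p ^ s) 1 ((2 : F) * -1) = 1 :=
    revDickson_mul_eq_one k (by norm_num) (fun h => hF3 (by linear_combination h))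
      (by exact_mod_cast hfix 2) (by exact_mod_cast hfix (-1))
  exact fun hbij => hF2 (by linear_combination hbij.injective (hD₀.trans hD₂.symm))

theorem stmt_10 {F : Type*} [Field F] [Fintype F] {p e : ℕ} [CharP F p]
    (hp : p.Prime) (h3 : 3 < p) (hcard : Fintype.card F = p ^ e)
    (s : ℕ) (hs : 1 ≤ s) (hse : s ≤ e) (k : ℤ) (hk : ¬ ((p : ℤ) ∣ k)) :
    ¬ Function.Bijective (fun x : F => revDickson k (p ^ s) 1 x) :=
  stmt_10_general hp h3 s k
end

section
/- Let q = p^e, p > 3, and suppose k ≢ 1 (mod p). If D_{n,k}(1,x) is a permutation polynomial of F_q, then n ≢ 1 (mod 6). -/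
/-!
A permutation polynomial is injective, while for `n ≡ 1 (mod 6)` the polynomial `D_{n,k}(1, x)`
takes the value `1` both at `x = 0` and at `x = 1`. At `x = 1` the coefficient formula gives
`A n + (k - 1) A (n - 2)`, where `A n = ∑ᵢ (-1)ⁱ C(n - i, i)` is a signed antidiagonal sum of
Pascal's triangle. Pascal's rule gives `A (n + 2) = A (n + 1) - A n`, so `A` has period `6`
with values `1, 1, 0, -1, -1, 0`; hence `A n = 1` and `A (n - 2) = 0` when `n ≡ 1 (mod 6)`.
-/

open Finset

def altDiagChooseSum (n : ℕ) : ℤ := ∑ p ∈ antidiagonal n, (-1) ^ p.2 * (p.1.choose p.2 : ℤ)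

namespace altDiagChooseSum

theorem eq_sum_range (n : ℕ) :
    altDiagChooseSum n = ∑ i ∈ range (n / 2 + 1), (-1) ^ i * ((n - i).choose i : ℤ) := by
  rw [altDiagChooseSum, ← Nat.sum_antidiagonal_swap]
  simp only [Prod.fst_swap, Prod.snd_swap]
  rw [Nat.sum_antidiagonal_eq_sum_range_succ (fun i j => (-1) ^ i * (j.choose i : ℤ))]
  symm
  apply sum_subset
  · intro i
    simp only [mem_range]
    omega
  · intro i _ hi
    simp only [mem_range, not_lt] at hi
    rw [Nat.choose_eq_zero_of_lt (by omega), Nat.cast_zero, mul_zero]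

theorem add_two (n : ℕ) :
    altDiagChooseSum (n + 2) = altDiagChooseSum (n + 1) - altDiagChooseSum n := by
  simp [altDiagChooseSum, Nat.antidiagonal_succ_succ', Nat.antidiagonal_succ',
    Nat.choose_succ_succ, sum_add_distrib, pow_succ, mul_add]
  ring

theorem add_three (n : ℕ) : altDiagChooseSum (n + 3) = -altDiagChooseSum n := by
  rw [add_two (n + 1), add_two n]
  ring

theorem add_six (n : ℕ) : altDiagChooseSum (n + 6) = altDiagChooseSum n := by
  rw [add_three (n + 3), add_three n, neg_neg]

theorem mod_six (n : ℕ) : altDiagChooseSum (n % 6) = altDiagChooseSum n := by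
  conv_rhs => rw [← Nat.mod_add_div n 6]
  induction n / 6 with
  | zero => rfl
  | succ m ih => rw [Nat.mul_succ, ← add_assoc, add_six, ih]

theorem of_mod_six_eq_one {n : ℕ} (hn : n % 6 = 1) : altDiagChooseSum n = 1 := by
  rw [← mod_six, hn]
  rfl

theorem of_mod_six_eq_five {n : ℕ} (hn : n % 6 = 5) : altDiagChooseSum n = 0 := by
  rw [← mod_six, hn]
  rfl

end altDiagChooseSum

section revDickson

variable {F : Type*} [Field F] (k : ℤ)

theorem revDickson_one_zero {n : ℕ} (hn : n ≠ 0) : revDickson k n 1 (0 : F) = 1 := by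
  simp [revDickson, hn, sum_range_succ']

theorem revDickson_one_one {n : ℕ} (hn : 2 ≤ n) :
    revDickson k n 1 (1 : F) =
      altDiagChooseSum n + (k - 1) * altDiagChooseSum (n - 2) := by
  have hhalf : (n - 2) / 2 + 1 = n / 2 := by omega
  rw [revDickson, if_neg (by omega), altDiagChooseSum.eq_sum_range,
    altDiagChooseSum.eq_sum_range, hhalf, sum_range_succ', sum_range_succ']
  push_cast
  rw [mul_sum, add_right_comm, ← sum_add_distrib]
  congr 1
  · refine sum_congr rfl fun j _ => ?_
    have hsub : n - (j + 1) - 1 = n - 2 - j := by omega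
    simp only [hsub, one_pow, mul_one]
    ring
  · simp

theorem revDickson_one_one_of_mod_six_eq_one {n : ℕ} (hn : n % 6 = 1) :
    revDickson k n 1 (1 : F) = 1 := by
  obtain rfl | hn1 := eq_or_ne n 1
  · simp [revDickson]
  rw [revDickson_one_one k (by omega), altDiagChooseSum.of_mod_six_eq_one hn,
    altDiagChooseSum.of_mod_six_eq_five (by omega)]
  simp

end revDickson

theorem stmt_15_general {F : Type*} [Field F]
    (k : ℤ) (n : ℕ)
    (hPP : Function.Bijective (fun x : F => revDickson k n 1 x)) :
    n % 6 ≠ 1 := by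
  intro hn
  have hzero : revDickson k n 1 (0 : F) = 1 := revDickson_one_zero k (by omega)
  have hone : revDickson k n 1 (1 : F) = 1 := revDickson_one_one_of_mod_six_eq_one k hn
  exact zero_ne_one (hPP.injective (hzero.trans hone.symm))

theorem stmt_15 {F : Type*} [Field F] [Fintype F] {p e : ℕ} [CharP F p]
    (hp : p.Prime) (h3 : 3 < p) (hcard : Fintype.card F = p ^ e)
    (k : ℤ) (hk : (k : ZMod p) ≠ 1) (n : ℕ)
    (hPP : Function.Bijective (fun x : F => revDickson k n 1 x)) :
    n % 6 ≠ 1 :=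
  stmt_15_general k n hPP
end

section
/- Let p > 3 and n ≥ 1. Define the auxiliary polynomial p_{n,k}(x) = k·Σ_{j≥0} C(n,2j+1)·x^j − (k−2)·Σ_{j≥0} C(n,2j)·x^j. Then for every x in F_q, D_{n,k}(1,x) = (1/2^n)·p_{n,k}(1−4x). -/
/-!
After scaling by `2 ^ n`, both sides satisfy the recurrence `X (n + 2) = 2 X (n + 1) - 4x X n`
and agree at `n = 0, 1`. For the reversed Dickson polynomial, `D (n + 2) = D (n + 1) - x D n`
follows coefficientwise from Pascal's rule along the shallow diagonals `C(n - i, i)`. For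
`p_{n,k}(u)`, the even and odd binomial sums are the two halves of `(1 + √u) ^ n`, so multiplying
by `1 + √u` gives `p (n + 2) = 2 p (n + 1) - (1 - u) p n`, and `1 - u = 4x` when `u = 1 - 4x`.
-/

open Finset

/-- The auxiliary polynomial `p_{n,k}(x) = k·Σ_j C(n,2j+1)x^j - (k-2)·Σ_j C(n,2j)x^j`. -/
noncomputable def pAux {F : Type*} [Field F] (k : ℤ) (n : ℕ) (x : F) : F :=
  (k : F) * ∑ j ∈ Finset.range (n / 2 + 1), (n.choose (2 * j + 1) : F) * x ^ j
    - ((k : F) - 2) * ∑ j ∈ Finset.range (n / 2 + 1), (n.choose (2 * j) : F) * x ^ j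

theorem sum_range_succ_mul_pow_of_rec {R : Type*} [CommSemiring R] {a b c : ℕ → R} (y : R)
    (N : ℕ) (h_zero : a 0 = b 0) (h_succ : ∀ i, a (i + 1) = b (i + 1) + c i) (h_top : c N = 0) :
    ∑ i ∈ range (N + 1), a i * y ^ i =
      ∑ i ∈ range (N + 1), b i * y ^ i + y * ∑ i ∈ range (N + 1), c i * y ^ i := by
  rw [sum_range_succ' _ N, sum_range_succ' _ N, sum_range_succ _ N, h_top, zero_mul, add_zero,
    mul_sum]
  simp only [h_succ, h_zero, add_mul, sum_add_distrib]
  rw [sum_congr rfl fun i _ => show c i * y ^ (i + 1) = y * (c i * y ^ i) by ring]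
  ring

theorem Nat.choose_add_two_sub_succ (n i : ℕ) :
    (n + 2 - (i + 1)).choose (i + 1) = (n + 1 - (i + 1)).choose (i + 1) + (n - i).choose i := by
  rcases le_or_gt i n with h | h
  · rw [show n + 2 - (i + 1) = n - i + 1 by omega, show n + 1 - (i + 1) = n - i by omega,
      Nat.choose_succ_succ', add_comm]
  · rw [show n - i = 0 by omega, show n + 1 - (i + 1) = 0 by omega,
      Nat.choose_eq_zero_of_lt (by omega : n + 2 - (i + 1) < i + 1)]
    simp [Nat.choose_eq_zero_of_lt (by omega : 0 < i)]

section Dickson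

def revDicksonCoeff (k : ℤ) (n i : ℕ) : ℤ :=
  k * ((n - i).choose i : ℤ) -
    (k - 1) * (if i = 0 then 1 else ((n - i).choose i : ℤ) + ((n - i - 1).choose (i - 1) : ℤ))

theorem revDicksonCoeff_eq_zero (k : ℤ) {n i : ℕ} (hn : 2 ≤ n) (hi : n < 2 * i) :
    revDicksonCoeff k n i = 0 := by
  have h0 : i ≠ 0 := by omega
  simp [revDicksonCoeff, h0, Nat.choose_eq_zero_of_lt (by omega : n - i < i),
    Nat.choose_eq_zero_of_lt (by omega : n - i - 1 < i - 1)]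

theorem revDicksonCoeff_add_two (k : ℤ) {n : ℕ} (hn : 2 ≤ n) (i : ℕ) :
    revDicksonCoeff k (n + 2) (i + 1) =
      revDicksonCoeff k (n + 1) (i + 1) + revDicksonCoeff k n i := by
  obtain ⟨m, rfl⟩ : ∃ m, n = m + 2 := ⟨n - 2, by omega⟩
  rcases i with _ | j
  · simp [revDicksonCoeff]
    ring
  · have h₁ := Nat.choose_add_two_sub_succ (m + 2) (j + 1)
    have h₂ := Nat.choose_add_two_sub_succ m j
    simp only [revDicksonCoeff, add_eq_zero, one_ne_zero, and_false, if_false, Nat.add_sub_cancel,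
      show m + 2 + 2 - (j + 1 + 1) - 1 = m + 2 - (j + 1) by omega,
      show m + 2 + 1 - (j + 1 + 1) - 1 = m + 1 - (j + 1) by omega,
      show m + 2 - (j + 1) - 1 = m - j by omega, h₁, h₂]
    push_cast
    ring

variable {F : Type*} [Field F]

theorem revDickson_one_eq_sum_range (k : ℤ) {n N : ℕ} (hn : 2 ≤ n) (hN : n / 2 < N) (x : F) :
    revDickson k n 1 x = ∑ i ∈ range N, (revDicksonCoeff k n i : F) * (-x) ^ i := by
  rw [eventually_constant_sum
      (fun i hi => by rw [revDicksonCoeff_eq_zero k hn (by omega)]; simp) hN,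
    revDickson, if_neg (by omega)]
  refine sum_congr rfl fun i _ => ?_
  simp [revDicksonCoeff]

theorem revDickson_one_add_two (k : ℤ) (n : ℕ) (x : F) :
    revDickson k (n + 2) 1 x = revDickson k (n + 1) 1 x - x * revDickson k n 1 x := by
  -- Truncated subtraction makes `revDicksonCoeff k 1 1 = 1 - k`, so `n = 0, 1` are computed apart.
  rcases n with _ | _ | m
  · simp [revDickson, sum_range_succ]
    ring
  · simp [revDickson, sum_range_succ]
    ring
  · have h := sum_range_succ_mul_pow_of_rec (a := fun i => (revDicksonCoeff k (m + 4) i : F))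
      (b := fun i => (revDicksonCoeff k (m + 3) i : F))
      (c := fun i => (revDicksonCoeff k (m + 2) i : F)) (-x) (m + 4) (by simp [revDicksonCoeff])
      (fun i => by
        simpa using
          congrArg ((↑) : ℤ → F) (revDicksonCoeff_add_two k (n := m + 2) (by omega) i))
      (by
        simp [revDicksonCoeff_eq_zero k (by omega : 2 ≤ m + 2) (by omega : m + 2 < 2 * (m + 4))])
    rw [revDickson_one_eq_sum_range k (by omega) (by omega : (m + 4) / 2 < m + 5),
      revDickson_one_eq_sum_range k (by omega) (by omega : (m + 3) / 2 < m + 5),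
      revDickson_one_eq_sum_range k (by omega) (by omega : (m + 2) / 2 < m + 5), h]
    ring

end Dickson

section BinomialSums

variable {R : Type*} [CommSemiring R]

def evenBinomialSum (n : ℕ) (u : R) : R :=
  ∑ j ∈ range (n / 2 + 1), (n.choose (2 * j) : R) * u ^ j

def oddBinomialSum (n : ℕ) (u : R) : R :=
  ∑ j ∈ range (n / 2 + 1), (n.choose (2 * j + 1) : R) * u ^ j

theorem evenBinomialSum_eq_sum_range {n N : ℕ} (hN : n / 2 < N) (u : R) :
    evenBinomialSum n u = ∑ j ∈ range N, (n.choose (2 * j) : R) * u ^ j :=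
  (eventually_constant_sum (fun j hj => by rw [Nat.choose_eq_zero_of_lt (by omega)]; simp) hN).symm

theorem oddBinomialSum_eq_sum_range {n N : ℕ} (hN : n / 2 < N) (u : R) :
    oddBinomialSum n u = ∑ j ∈ range N, (n.choose (2 * j + 1) : R) * u ^ j :=
  (eventually_constant_sum (fun j hj => by rw [Nat.choose_eq_zero_of_lt (by omega)]; simp) hN).symm

theorem oddBinomialSum_succ (n : ℕ) (u : R) :
    oddBinomialSum (n + 1) u = oddBinomialSum n u + evenBinomialSum n u := by
  rw [oddBinomialSum_eq_sum_range (by omega : (n + 1) / 2 < n + 1),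
    oddBinomialSum_eq_sum_range (by omega : n / 2 < n + 1),
    evenBinomialSum_eq_sum_range (by omega : n / 2 < n + 1), ← sum_add_distrib]
  refine sum_congr rfl fun j _ => ?_
  rw [Nat.choose_succ_succ']
  push_cast
  ring

theorem evenBinomialSum_succ (n : ℕ) (u : R) :
    evenBinomialSum (n + 1) u = evenBinomialSum n u + u * oddBinomialSum n u := by
  have h := sum_range_succ_mul_pow_of_rec (a := fun j => ((n + 1).choose (2 * j) : R))
    (b := fun j => (n.choose (2 * j) : R)) (c := fun j => (n.choose (2 * j + 1) : R)) u (n + 1)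
    (by simp)
    (fun j => by
      rw [show 2 * (j + 1) = 2 * j + 1 + 1 by ring, Nat.choose_succ_succ']
      push_cast
      ring)
    (by simp [Nat.choose_eq_zero_of_lt (by omega : n < 2 * (n + 1) + 1)])
  rw [evenBinomialSum_eq_sum_range (by omega : (n + 1) / 2 < n + 2),
    evenBinomialSum_eq_sum_range (by omega : n / 2 < n + 2),
    oddBinomialSum_eq_sum_range (by omega : n / 2 < n + 2), h]

end BinomialSums

section

variable {F : Type*} [Field F]

theorem pAux_eq (k : ℤ) (n : ℕ) (u : F) :
    pAux k n u = k * oddBinomialSum n u - (k - 2) * evenBinomialSum n u :=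
  rfl

theorem pAux_add_two (k : ℤ) (n : ℕ) (u : F) :
    pAux k (n + 2) u = 2 * pAux k (n + 1) u - (1 - u) * pAux k n u := by
  simp only [pAux_eq, evenBinomialSum_succ, oddBinomialSum_succ]
  ring

theorem two_pow_mul_revDickson_one (k : ℤ) (n : ℕ) (x : F) :
    2 ^ n * revDickson k n 1 x = pAux k n (1 - 4 * x) := by
  induction n using Nat.twoStepInduction with
  | zero => simp [revDickson, pAux]
  | one => simp [revDickson, pAux]
  | more n ih₀ ih₁ =>
    rw [revDickson_one_add_two, pAux_add_two, ← ih₀, ← ih₁]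
    ring

end

theorem stmt_16_general {F : Type*} [Field F] {p : ℕ} [CharP F p]
    (h3 : 3 < p) (k : ℤ) (n : ℕ) (x : F) :
    revDickson k n 1 x = 1 / 2 ^ n * pAux k n (1 - 4 * x) := by
  have h2 : (2 : F) ≠ 0 := Ring.two_ne_zero (by rw [ringChar.eq F p]; omega)
  rw [← two_pow_mul_revDickson_one, ← mul_assoc, one_div_mul_cancel (pow_ne_zero n h2), one_mul]

theorem stmt_16 {F : Type*} [Field F] [Fintype F] {p : ℕ} [CharP F p]
    (hp : p.Prime) (h3 : 3 < p) (k : ℤ) (n : ℕ) (hn : 1 ≤ n) (x : F) :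
    revDickson k n 1 x = 1 / 2 ^ n * pAux k n (1 - 4 * x) :=
  stmt_16_general h3 k n x
end

section
/- In the polynomial expansion −1 − (t − t^q)^{q−1} = Σ_{i=0}^{q²−q} b_i t^i over F_p, writing i = α + βq with 0 ≤ α, β ≤ q−1, the coefficient b_i equals (−1)^{β+1}·C(q−1,β) if α+β = q−1, equals −1 if α = β = 0, and equals 0 otherwise. -/
/-!
Expanding binomially, `(X - X^q)^n = ∑ₖ (-1)^k C(n,k) X^(n - k + k q)`. For `n < q` the exponent
`n - k + k q` is a two-digit base-`q` numeral, so the monomial at `α + β q` (with `α < q`) comes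
from the single index `k = β`, and only when `α = n - β`. The constant `-1` contributes only at
`α = β = 0`, which is disjoint from `α + β = q - 1` once `q > 1`.
-/

open Polynomial

theorem Nat.add_mul_eq_add_mul_iff {q a b c d : ℕ} (ha : a < q) (hc : c < q) :
    a + b * q = c + d * q ↔ a = c ∧ b = d := by
  refine ⟨fun h => ?_, by rintro ⟨rfl, rfl⟩; rfl⟩
  have hq : 0 < q := by omega
  obtain ⟨hb, ha'⟩ := (Nat.div_mod_unique (a := a + b * q) (d := b) (c := a) hq).2 ⟨by ring, ha⟩
  obtain ⟨hd, hc'⟩ := (Nat.div_mod_unique (a := c + d * q) (d := d) (c := c) hq).2 ⟨by ring, hc⟩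
  rw [h] at hb ha'
  exact ⟨ha'.symm.trans hc', hb.symm.trans hd⟩

theorem Polynomial.X_sub_X_pow_pow_eq_sum {R : Type*} [CommRing R] (q n : ℕ) :
    ((X - X ^ q : R[X]) ^ n) =
      ∑ k ∈ Finset.range (n + 1), C ((-1) ^ k * (n.choose k : R)) * X ^ ((n - k) + k * q) := by
  rw [sub_eq_neg_add, add_pow]
  refine Finset.sum_congr rfl fun k _ => ?_
  rw [neg_pow, pow_add, mul_comm k q, pow_mul]
  simp only [map_mul, map_pow, map_neg, map_one, map_natCast]
  ring

theorem Polynomial.coeff_X_sub_X_pow_pow {R : Type*} [CommRing R] {q n α : ℕ} (hn : n < q)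
    (hα : α < q) (β : ℕ) :
    ((X - X ^ q : R[X]) ^ n).coeff (α + β * q) =
      if α + β = n then (-1) ^ β * (n.choose β : R) else 0 := by
  rw [X_sub_X_pow_pow_eq_sum, finsetSum_coeff]
  have hdigits : ∀ k ∈ Finset.range (n + 1),
      (α + β * q = n - k + k * q ↔ k = β ∧ α + β = n) := fun k hk => by
    rw [Nat.add_mul_eq_add_mul_iff hα (by omega)]
    simp only [Finset.mem_range] at hk
    omega
  simp_rw [coeff_C_mul_X_pow]
  rw [Finset.sum_congr rfl fun k hk => by rw [if_congr (hdigits k hk) rfl rfl, ite_and],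
    Finset.sum_ite_eq']
  simp only [Finset.mem_range]
  split_ifs <;> first | rfl | omega

theorem stmt_18_general (p e : ℕ) (h3 : 3 < p) (he : 1 ≤ e)
    (q : ℕ) (hq : q = p ^ e) (α β : ℕ) (hα : α ≤ q - 1) :
    (-1 - (Polynomial.X - Polynomial.X ^ q) ^ (q - 1) : Polynomial (ZMod p)).coeff (α + β * q) =
      if α + β = q - 1 then (-1) ^ (β + 1) * ((q - 1).choose β : ZMod p)
      else if α = 0 ∧ β = 0 then -1
      else 0 := by
  have hq1 : 1 < q := hq ▸ Nat.one_lt_pow (by omega) (by omega)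
  have hzero : α + β * q = 0 ↔ α = 0 ∧ β = 0 := by
    rw [Nat.add_eq_zero_iff, Nat.mul_eq_zero]
    omega
  rw [coeff_sub, coeff_neg, coeff_one, coeff_X_sub_X_pow_pow (by omega) (by omega)]
  simp only [hzero]
  split_ifs <;> first | omega | ring

theorem stmt_18 (p e : ℕ) (hp : p.Prime) (h3 : 3 < p) (he : 1 ≤ e)
    (q : ℕ) (hq : q = p ^ e) (α β : ℕ) (hα : α ≤ q - 1) (hβ : β ≤ q - 1) :
    (-1 - (Polynomial.X - Polynomial.X ^ q) ^ (q - 1) : Polynomial (ZMod p)).coeff (α + β * q) =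
      if α + β = q - 1 then (-1) ^ (β + 1) * ((q - 1).choose β : ZMod p)
      else if α = 0 ∧ β = 0 then -1
      else 0 :=
  stmt_18_general p e h3 he q hq α β hα
end
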